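/- arXiv:1612.05017 — 3 statements merged into one kernel-verified Lean document; each statement's English description precedes it below -/
import Mathlib

section
/- Let R be a commutative Artinian ring, 𝔪 a maximal ideal of R, and n a positive integer with 𝔪^n = 𝔪^(n+1). Then the canonical localization map R → R_𝔪 (the localization of R at 𝔪) is surjective and its kernel equals 𝔪^n; consequently R/𝔪^n is a local ring with maximal ideal the image of 𝔪, and R/𝔪^n ≅ R_𝔪 as rings. -/
/-- In a commutative Artinian ring, if `𝔪` is maximal and `𝔪^n = 𝔪^(n+1)`, then the
localization map `R → R_𝔪` is surjective with kernel `𝔪^n`; consequently `R/𝔪^n` is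
local with maximal ideal the image of `𝔪`, and `R/𝔪^n ≅ R_𝔪`. -/
theorem artinian_localization_at_maximal {R : Type*} [CommRing R] [IsArtinianRing R]
    (𝔪 : Ideal R) (h𝔪 : 𝔪.IsMaximal) (n : ℕ) (hn : 0 < n) (hstab : 𝔪 ^ n = 𝔪 ^ (n + 1)) :
    Function.Surjective (algebraMap R (Localization.AtPrime 𝔪)) ∧
    RingHom.ker (algebraMap R (Localization.AtPrime 𝔪)) = 𝔪 ^ n ∧
    (∃ h : IsLocalRing (R ⧸ 𝔪 ^ n),
      IsLocalRing.maximalIdeal (R ⧸ 𝔪 ^ n) = Ideal.map (Ideal.Quotient.mk (𝔪 ^ n)) 𝔪) ∧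
    Nonempty ((R ⧸ 𝔪 ^ n) ≃+* Localization.AtPrime 𝔪) := by
  have hprime : 𝔪.IsPrime := h𝔪.isPrime
  set L := Localization.AtPrime 𝔪
  have hsurj : Function.Surjective (algebraMap R L) :=
    IsArtinianRing.localization_surjective 𝔪.primeCompl _
  set f := Ideal.Quotient.mk (𝔪 ^ n)
  have hfsurj : Function.Surjective f := Ideal.Quotient.mk_surjective
  have hker : RingHom.ker f = 𝔪 ^ n := Ideal.mk_ker
  have hle : 𝔪 ^ n ≤ 𝔪 := Ideal.pow_le_self hn.ne'
  -- comap of the image of 𝔪 is 𝔪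
  have hcm : Ideal.comap f (Ideal.map f 𝔪) = 𝔪 := by
    rw [Ideal.comap_map_of_surjective f hfsurj, ← RingHom.ker_eq_comap_bot, hker,
      sup_eq_left.2 hle]
  -- image of 𝔪 is maximal
  have hmax : (Ideal.map f 𝔪).IsMaximal := by
    rcases Ideal.map_eq_top_or_isMaximal_of_surjective f hfsurj h𝔪 with htop | h
    · exfalso
      apply h𝔪.ne_top
      rw [← hcm, htop, Ideal.comap_top]
    · exact h
  -- the quotient is local with that maximal ideal
  have hloc : IsLocalRing (R ⧸ 𝔪 ^ n) := by
    refine IsLocalRing.of_unique_max_ideal ⟨Ideal.map f 𝔪, hmax, ?_⟩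
    intro J hJ
    have hcJ : (Ideal.comap f J).IsMaximal :=
      Ideal.comap_isMaximal_of_surjective f hfsurj
    have hsub : 𝔪 ≤ Ideal.comap f J := by
      have h1 : 𝔪 ^ n ≤ Ideal.comap f J := by
        intro x hx
        simp only [Ideal.mem_comap]
        rw [show f x = 0 from (Ideal.Quotient.eq_zero_iff_mem).2 hx]
        exact J.zero_mem
      exact hcJ.isPrime.le_of_pow_le h1
    have heq : Ideal.comap f J = 𝔪 := (h𝔪.eq_of_le hcJ.ne_top hsub).symm
    rw [← Ideal.map_comap_of_surjective f hfsurj J, heq]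
  have hmaxeq : IsLocalRing.maximalIdeal (R ⧸ 𝔪 ^ n) = Ideal.map f 𝔪 :=
    (IsLocalRing.eq_maximalIdeal hmax).symm
  -- powers of 𝔪 stabilize from n on
  have hpow : ∀ m, n ≤ m → 𝔪 ^ m = 𝔪 ^ n := by
    intro m hm
    induction m with
    | zero => omega
    | succ k ih =>
      rcases Nat.lt_or_ge n (k + 1) with hlt | hge
      · have hk : n ≤ k := by omega
        rw [pow_succ, ih hk, ← pow_succ, ← hstab]
      · have : n = k + 1 := by omega
        rw [this]
  -- (map 𝔪)^n = 0 in the localization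
  have hnilp : (Ideal.map (algebraMap R L) 𝔪) ^ n = ⊥ := by
    haveI hart : IsArtinianRing L := IsArtinianRing.localization_artinian 𝔪.primeCompl L
    obtain ⟨k, hk⟩ := IsArtinianRing.isNilpotent_jacobson_bot (R := L)
    have hjac : Ideal.jacobson (⊥ : Ideal L) = IsLocalRing.maximalIdeal L :=
      IsLocalRing.jacobson_eq_maximalIdeal ⊥ bot_ne_top
    have hmapmax : Ideal.map (algebraMap R L) 𝔪 = IsLocalRing.maximalIdeal L :=
      Localization.AtPrime.map_eq_maximalIdeal
    have hml : (IsLocalRing.maximalIdeal L) ^ k = ⊥ := by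
      rw [← hjac]; exact hk
    have hle2 : (Ideal.map (algebraMap R L) 𝔪) ^ n ≤ ⊥ := calc (Ideal.map (algebraMap R L) 𝔪) ^ n = Ideal.map (algebraMap R L) (𝔪 ^ n) :=
          (Ideal.map_pow _ _ _).symm
      _ = Ideal.map (algebraMap R L) (𝔪 ^ (n + k)) := by rw [hpow (n + k) (Nat.le_add_right n k)]
      _ = (Ideal.map (algebraMap R L) 𝔪) ^ (n + k) := Ideal.map_pow _ _ _
      _ ≤ (IsLocalRing.maximalIdeal L) ^ k := by
          rw [hmapmax]; exact Ideal.pow_le_pow_right (Nat.le_add_left k n)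
      _ = ⊥ := hml
    exact hle2.antisymm bot_le
  -- kernel of the localization map is 𝔪 ^ n
  have hkerloc : RingHom.ker (algebraMap R L) = 𝔪 ^ n := by
    apply le_antisymm
    · -- ker ⊆ 𝔪 ^ n
      intro x hx
      rw [RingHom.mem_ker] at hx
      obtain ⟨⟨s, hs⟩, hsx⟩ := (IsLocalization.map_eq_zero_iff 𝔪.primeCompl L x).1 hx
      have hsx' : s * x = 0 := hsx
      have hfs : IsUnit (f s) := by
        by_contra hu
        have hmem : f s ∈ IsLocalRing.maximalIdeal (R ⧸ 𝔪 ^ n) := hu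
        rw [hmaxeq] at hmem
        exact hs (by rwa [← hcm, Ideal.mem_comap] : s ∈ 𝔪)
      have h0 : f s * f x = 0 := by rw [← map_mul, hsx', map_zero]
      have hfx : f x = 0 := hfs.mul_right_eq_zero.1 h0
      rwa [Ideal.Quotient.eq_zero_iff_mem] at hfx
    · -- 𝔪 ^ n ⊆ ker
      intro x hx
      rw [RingHom.mem_ker, ← Ideal.mem_bot, ← hnilp, ← Ideal.map_pow]
      exact Ideal.mem_map_of_mem _ hx
  refine ⟨hsurj, hkerloc, ⟨hloc, hmaxeq.symm ▸ rfl⟩, ?_⟩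
  exact ⟨(Ideal.quotEquivOfEq hkerloc.symm).trans
    (RingHom.quotientKerEquivOfSurjective hsurj)⟩
end

section
/- Let ℓ be a prime number and T a nonzero commutative ℤ_ℓ-algebra which is free and finitely generated as a ℤ_ℓ-module, where ℤ_ℓ denotes the ring of ℓ-adic integers. Then a prime ideal 𝔭 of T is a minimal prime of T if and only if ℓ·1_T ∉ 𝔭, where ℓ·1_T is the image of ℓ under the structure map ℤ_ℓ → T. Consequently, the minimal primes of T are in bijection with the prime ideals of the localization T[1/ℓ] of T away from ℓ, via contraction along the localization map T → T[1/ℓ]. -/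
/-!
Since `T` is free over the domain `ℤ_ℓ`, the element `ℓ·1_T` is a nonzerodivisor, so it lies in
no minimal prime. Conversely, a prime `𝔭` avoiding `ℓ` contracts to a prime of `ℤ_ℓ` not
containing `ℓ`, which must be `0`; as `T` is integral over `ℤ_ℓ`, primes lying over the same
prime are incomparable, so `𝔭` is minimal. The bijection is then the usual correspondence
between primes of `T[1/ℓ]` and primes of `T` avoiding `ℓ`.
-/

open IsLocalRing

lemma algebraMap_mem_nonZeroDivisors_of_isRegular {R A : Type*} [CommRing R] [CommRing A]
    [Algebra R A] [Module.IsTorsionFree R A] {r : R} (hr : IsRegular r) :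
    algebraMap R A r ∈ nonZeroDivisors A := by
  rw [mem_nonZeroDivisors_iff_right]
  intro a ha
  refine hr.isSMulRegular (show r • a = r • 0 from ?_)
  rwa [smul_zero, Algebra.smul_def, mul_comm]

lemma Ideal.under_eq_bot_of_algebraMap_notMem {R A : Type*} [CommRing R] [IsDomain R]
    [IsLocalRing R] [Ring.KrullDimLE 1 R] [CommRing A] [Algebra R A] {x : R}
    (hx : x ∈ maximalIdeal R) (P : Ideal A) [P.IsPrime] (hxP : algebraMap R A x ∉ P) :
    P.under R = ⊥ := by
  by_contra hne
  have hmax : (P.under R).IsMaximal := Ideal.isMaximal_of_isPrime_of_ne_bot _ hne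
  rw [← IsLocalRing.eq_maximalIdeal hmax] at hx
  exact hxP hx

lemma Ideal.mem_minimalPrimes_of_under_eq_bot {R A : Type*} [CommRing R] [CommRing A]
    [Algebra R A] [Algebra.IsIntegral R A] (P : Ideal A) [P.IsPrime] (hP : P.under R = ⊥) :
    P ∈ minimalPrimes A := by
  simpa [hP] using Ideal.IsIntegral.mem_minimalPrimes_map_under (R := R) P

theorem Ideal.mem_minimalPrimes_iff_algebraMap_notMem {R A : Type*} [CommRing R] [IsDomain R]
    [IsLocalRing R] [Ring.KrullDimLE 1 R] [CommRing A] [Algebra R A] [Algebra.IsIntegral R A]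
    {x : R} (hx : x ∈ maximalIdeal R) (hxA : algebraMap R A x ∈ nonZeroDivisors A)
    (P : Ideal A) [P.IsPrime] :
    P ∈ minimalPrimes A ↔ algebraMap R A x ∉ P :=
  ⟨fun hP hxP => notMem_nonZeroDivisors_of_mem_mem_minimalPrimes hxP hP hxA,
    fun hxP => P.mem_minimalPrimes_of_under_eq_bot (P.under_eq_bot_of_algebraMap_notMem hx hxP)⟩

theorem IsLocalization.bijOn_comap_isPrime {R S : Type*} [CommRing R] [CommRing S] [Algebra R S]
    (M : Submonoid R) [IsLocalization M S] :
    Set.BijOn (Ideal.comap (algebraMap R S)) {q | q.IsPrime}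
      {p | p.IsPrime ∧ Disjoint (M : Set R) p} := by
  refine ⟨fun q hq => (isPrime_iff_isPrime_disjoint M S q).mp hq,
    fun q₁ _ q₂ _ h => (orderEmbedding M S).injective h, ?_⟩
  rintro p ⟨hp, hdisj⟩
  exact ⟨p.map (algebraMap R S), isPrime_of_isPrime_disjoint M S p hp hdisj,
    under_map_of_isPrime_disjoint M S hp hdisj⟩

theorem minimal_primes_iff_ell_not_mem_general {ℓ : ℕ} [Fact ℓ.Prime]
    {T : Type*} [CommRing T] [Algebra ℤ_[ℓ] T]
    [Module.Free ℤ_[ℓ] T] [Module.Finite ℤ_[ℓ] T] :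
    (∀ 𝔭 : Ideal T, 𝔭.IsPrime →
      (𝔭 ∈ minimalPrimes T ↔ algebraMap ℤ_[ℓ] T (ℓ : ℤ_[ℓ]) ∉ 𝔭)) ∧
    Set.BijOn
      (fun q : Ideal (Localization.Away (algebraMap ℤ_[ℓ] T (ℓ : ℤ_[ℓ]))) =>
        Ideal.comap
          (algebraMap T (Localization.Away (algebraMap ℤ_[ℓ] T (ℓ : ℤ_[ℓ])))) q)
      {q | q.IsPrime} (minimalPrimes T) := by
  set t := algebraMap ℤ_[ℓ] T (ℓ : ℤ_[ℓ])
  have ht : t ∈ nonZeroDivisors T := algebraMap_mem_nonZeroDivisors_of_isRegular <|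
    IsRegular.of_ne_zero (Nat.cast_ne_zero.mpr (Fact.out : ℓ.Prime).ne_zero)
  have hmin (𝔭 : Ideal T) (h𝔭 : 𝔭.IsPrime) : 𝔭 ∈ minimalPrimes T ↔ t ∉ 𝔭 :=
    𝔭.mem_minimalPrimes_iff_algebraMap_notMem PadicInt.p_nonunit ht
  have hset :
      minimalPrimes T = {p : Ideal T | p.IsPrime ∧ Disjoint (Submonoid.powers t : Set T) p} := by
    ext p
    refine ⟨fun hp => ⟨hp.isPrime, ?_⟩, fun ⟨hp, hdisj⟩ => ?_⟩
    · have := hp.isPrime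
      exact (Ideal.disjoint_powers_iff_notMem_of_isPrime t).mpr ((hmin p this).mp hp)
    · exact (hmin p hp).mpr ((Ideal.disjoint_powers_iff_notMem_of_isPrime t).mp hdisj)
  exact ⟨hmin, hset ▸ IsLocalization.bijOn_comap_isPrime (Submonoid.powers t)⟩

/-- In a nonzero commutative `ℤ_ℓ`-algebra `T`, free and finitely generated as a
`ℤ_ℓ`-module, a prime ideal is a minimal prime iff it does not contain `ℓ·1_T`;
consequently contraction along `T → T[1/ℓ]` is a bijection from the prime ideals of
`T[1/ℓ]` onto the minimal primes of `T`. -/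
theorem minimal_primes_iff_ell_not_mem {ℓ : ℕ} [Fact ℓ.Prime]
    {T : Type*} [CommRing T] [Nontrivial T] [Algebra ℤ_[ℓ] T]
    [Module.Free ℤ_[ℓ] T] [Module.Finite ℤ_[ℓ] T] :
    (∀ 𝔭 : Ideal T, 𝔭.IsPrime →
      (𝔭 ∈ minimalPrimes T ↔ algebraMap ℤ_[ℓ] T (ℓ : ℤ_[ℓ]) ∉ 𝔭)) ∧
    Set.BijOn
      (fun q : Ideal (Localization.Away (algebraMap ℤ_[ℓ] T (ℓ : ℤ_[ℓ]))) =>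
        Ideal.comap
          (algebraMap T (Localization.Away (algebraMap ℤ_[ℓ] T (ℓ : ℤ_[ℓ])))) q)
      {q | q.IsPrime} (minimalPrimes T) :=
  minimal_primes_iff_ell_not_mem_general
end

section
/- Let R be a commutative ring, I an ideal of R with ⋂_{n ≥ 1} Iⁿ = (0), and f ∈ R[X] a polynomial. Assume there exist a ∈ R and b ∈ R[X] with 1 = a·f(X) + b(X)·f′(X) in R[X], and let a₀ ∈ R satisfy f(a₀) ∈ I. Define aₙ := aₙ₋₁ − f(aₙ₋₁)·b(aₙ₋₁) for n ≥ 1. Then for every N ∈ ℕ there exists n₀ such that f(aₙ) ∈ I^N for all n ≥ n₀; that is, the sequence f(aₙ) converges to 0 in the I-adic topology on R. -/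
lemma newton_step {R : Type*} [CommRing R] (I : Ideal R)
    (f : Polynomial R) (a : R) (b : Polynomial R)
    (hab : (1 : Polynomial R) = Polynomial.C a * f + b * Polynomial.derivative f)
    (x : R) (k : ℕ) (hk : 1 ≤ k) (hx : f.eval x ∈ I ^ k) :
    f.eval (x - f.eval x * b.eval x) ∈ I ^ (k + 1) := by
  obtain ⟨c, hc⟩ := f.binomExpansion x (-(f.eval x * b.eval x))
  have h1 : (1 : R) = a * f.eval x + b.eval x * (Polynomial.derivative f).eval x := by
    have := congrArg (Polynomial.eval x) hab
    simpa using this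
  have key : f.eval (x - f.eval x * b.eval x)
      = (f.eval x)^2 * (a + c * (b.eval x)^2) := by
    rw [sub_eq_add_neg, hc]
    have : f.eval x + (Polynomial.derivative f).eval x * -(f.eval x * b.eval x)
        = f.eval x * (1 - b.eval x * (Polynomial.derivative f).eval x) := by ring
    rw [this]
    have h2 : (1 : R) - b.eval x * (Polynomial.derivative f).eval x = a * f.eval x := by
      rw [h1]; ring
    rw [h2]; ring
  rw [key]
  have : (f.eval x)^2 ∈ I ^ (2 * k) := by
    rw [two_mul, pow_add, sq]
    exact Ideal.mul_mem_mul hx hx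
  have hle : I ^ (2 * k) ≤ I ^ (k + 1) := Ideal.pow_le_pow_right (by omega)
  exact Ideal.mul_mem_right _ _ (hle this)

/-- Convergence of the Newton method: if `⋂_{n ≥ 1} Iⁿ = (0)`, `1 = a·f + b·f'` in
`R[X]` and `f(a₀) ∈ I`, then the Newton iterates satisfy `f(aₙ) → 0` in the
`I`-adic topology: for every `N` there is `n₀` with `f(aₙ) ∈ I^N` for all `n ≥ n₀`. -/
theorem newton_method_convergence {R : Type*} [CommRing R] (I : Ideal R)
    (hI : (⨅ (n : ℕ) (_ : 1 ≤ n), I ^ n) = ⊥)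
    (f : Polynomial R) (a : R) (b : Polynomial R)
    (hab : (1 : Polynomial R) = Polynomial.C a * f + b * Polynomial.derivative f)
    (seq : ℕ → R) (h0 : f.eval (seq 0) ∈ I)
    (hrec : ∀ n : ℕ, 1 ≤ n → seq n = seq (n - 1) - f.eval (seq (n - 1)) * b.eval (seq (n - 1))) :
    ∀ N : ℕ, ∃ n₀ : ℕ, ∀ n ≥ n₀, f.eval (seq n) ∈ I ^ N := by
  have main : ∀ n : ℕ, f.eval (seq n) ∈ I ^ (n + 1) := by
    intro n
    induction n with
    | zero => simpa using h0
    | succ m ih =>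
      have := hrec (m + 1) (by omega)
      simp only [Nat.add_sub_cancel] at this
      rw [this]
      exact newton_step I f a b hab (seq m) (m + 1) (by omega) ih
  intro N
  refine ⟨N, fun n hn => ?_⟩
  exact Ideal.pow_le_pow_right (by omega) (main n)
end
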